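/- arXiv:2402.14133 — 6 statements merged into one kernel-verified Lean document; each statement's English description precedes it below -/
import Mathlib

section
/- Let i, m0 : ℝ × ℝ → ℝ and m1 : ℝ × ℝ × ℝ → ℝ be continuous, fix t ∈ ℝ and a ≥ 0, and define M_{t,a}(y) := exp(-∫_0^y (m0(t-a+τ, τ) + i(t-a+τ, τ)) dτ) and Y_{t,a}(δ) := exp(-∫_0^δ (m1(t-δ+τ, a-δ+τ, τ) - i(t-δ+τ, a-δ+τ) - m0(t-δ+τ, a-δ+τ)) dτ). Then the prevalence-odds given by Keiding's formula equals a pseudo-convolution of the incidence with Y: (1 / M_{t,a}(a)) · ∫_0^a i(t-δ, a-δ) · M_{t,a}(a-δ) · exp(-∫_0^δ m1(t-δ+τ, a-δ+τ, τ) dτ) dδ = ∫_0^a i(t-δ, a-δ) · Y_{t,a}(δ) dδ. -/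
/-!
Pointwise in the duration `δ`, `M (a - δ) / M a` is the exponential of the integral of
`m0 + i` along the cohort's lifeline over the ages `[a - δ, a]`. Reparametrising those ages as
`a - δ + τ` with `τ ∈ [0, δ]` puts this integral over the same range as the `m1` integral,
and the two combine into `Y δ`.
-/

open intervalIntegral

theorem exp_neg_integral_mul_exp_neg_integral_eq {f g : ℝ → ℝ} {b δ : ℝ}
    (hg₀ : IntervalIntegrable g MeasureTheory.volume 0 (b - δ))
    (hg₁ : IntervalIntegrable g MeasureTheory.volume (b - δ) b)
    (hf : IntervalIntegrable f MeasureTheory.volume 0 δ) :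
    Real.exp (-∫ τ in (0:ℝ)..b - δ, g τ) * Real.exp (-∫ τ in (0:ℝ)..δ, f τ) =
      Real.exp (-∫ τ in (0:ℝ)..b, g τ) *
        Real.exp (-∫ τ in (0:ℝ)..δ, (f τ - g (b - δ + τ))) := by
  have hshift : (∫ τ in (0:ℝ)..δ, g (b - δ + τ)) = ∫ τ in (b - δ)..b, g τ := by
    simp
  have hg₁' : IntervalIntegrable (fun τ => g (b - δ + τ)) MeasureTheory.volume 0 δ := by
    simpa using hg₁.comp_add_left (b - δ)
  rw [← Real.exp_add, ← Real.exp_add, integral_sub hf hg₁', hshift,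
    ← integral_add_adjacent_intervals hg₀ hg₁]
  ring_nf

theorem keiding_odds_eq_pseudo_convolution_general
    (i m0 : ℝ × ℝ → ℝ) (m1 : ℝ × ℝ × ℝ → ℝ)
    (hi : Continuous i) (hm0 : Continuous m0) (hm1 : Continuous m1)
    (t a : ℝ)
    (M : ℝ → ℝ)
    (hM : ∀ y, M y =
      Real.exp (-∫ τ in (0:ℝ)..y, (m0 (t - a + τ, τ) + i (t - a + τ, τ))))
    (Y : ℝ → ℝ)
    (hY : ∀ δ, Y δ =
      Real.exp (-∫ τ in (0:ℝ)..δ,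
        (m1 (t - δ + τ, a - δ + τ, τ) - i (t - δ + τ, a - δ + τ)
          - m0 (t - δ + τ, a - δ + τ)))) :
    (1 / M a) * ∫ δ in (0:ℝ)..a, i (t - δ, a - δ) * M (a - δ) *
        Real.exp (-∫ τ in (0:ℝ)..δ, m1 (t - δ + τ, a - δ + τ, τ)) =
      ∫ δ in (0:ℝ)..a, i (t - δ, a - δ) * Y δ := by
  set g : ℝ → ℝ := fun τ => m0 (t - a + τ, τ) + i (t - a + τ, τ)
  have hg : Continuous g := by fun_prop
  have hMa : M a ≠ 0 := by rw [hM]; exact (Real.exp_pos _).ne'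
  have hsurvival : ∀ δ, M (a - δ) *
      Real.exp (-∫ τ in (0:ℝ)..δ, m1 (t - δ + τ, a - δ + τ, τ)) = M a * Y δ := by
    intro δ
    have hY' : Y δ = Real.exp (-∫ τ in (0:ℝ)..δ,
        (m1 (t - δ + τ, a - δ + τ, τ) - g (a - δ + τ))) := by
      rw [hY]
      congr 2
      refine integral_congr fun τ _ => ?_
      simp only [g, show t - a + (a - δ + τ) = t - δ + τ by ring]
      ring
    rw [hM, hM, hY']
    exact exp_neg_integral_mul_exp_neg_integral_eq (hg.intervalIntegrable _ _)
      (hg.intervalIntegrable _ _) ((by fun_prop : Continuous fun τ : ℝ =>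
        m1 (t - δ + τ, a - δ + τ, τ)).intervalIntegrable _ _)
  rw [← integral_const_mul]
  refine integral_congr fun δ _ => ?_
  simp only [mul_assoc, hsurvival]
  field_simp

/-- The prevalence-odds given by Keiding's formula equals a pseudo-convolution
of the incidence with the weight `Y`. -/
theorem keiding_odds_eq_pseudo_convolution
    (i m0 : ℝ × ℝ → ℝ) (m1 : ℝ × ℝ × ℝ → ℝ)
    (hi : Continuous i) (hm0 : Continuous m0) (hm1 : Continuous m1)
    (t a : ℝ) (ha : 0 ≤ a)
    (M : ℝ → ℝ)
    (hM : ∀ y, M y =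
      Real.exp (-∫ τ in (0:ℝ)..y, (m0 (t - a + τ, τ) + i (t - a + τ, τ))))
    (Y : ℝ → ℝ)
    (hY : ∀ δ, Y δ =
      Real.exp (-∫ τ in (0:ℝ)..δ,
        (m1 (t - δ + τ, a - δ + τ, τ) - i (t - δ + τ, a - δ + τ)
          - m0 (t - δ + τ, a - δ + τ)))) :
    (1 / M a) * ∫ δ in (0:ℝ)..a, i (t - δ, a - δ) * M (a - δ) *
        Real.exp (-∫ τ in (0:ℝ)..δ, m1 (t - δ + τ, a - δ + τ, τ)) =
      ∫ δ in (0:ℝ)..a, i (t - δ, a - δ) * Y δ :=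
  keiding_odds_eq_pseudo_convolution_general i m0 m1 hi hm0 hm1 t a M hM Y hY
end

section
/- Let i, m0 : ℝ × ℝ → ℝ and m1 : ℝ × ℝ × ℝ → ℝ be continuous, let S : ℝ × ℝ → ℝ, and define C(t,a,d) := i(t-d, a-d) · S(t-d, a-d) · exp(-∫_0^d m1(t-d+τ, a-d+τ, τ) dτ). Then for every fixed (t0, a0) ∈ ℝ², the function h(d) := C(t0+d, a0+d, d) satisfies h(0) = i(t0, a0) · S(t0, a0) and, for every d ∈ ℝ, h is differentiable at d with h'(d) = -m1(t0+d, a0+d, d) · h(d); i.e., C solves the balance equation (∂_t + ∂_a + ∂_d)C = -m1·C along characteristics with initial condition C(t,a,0) = i(t,a)·S(t,a). -/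
/-- The explicit cohort solution `C` solves the balance equation
`(∂ₜ + ∂ₐ + ∂_d)C = -m1·C` along characteristics with `C(t,a,0) = i(t,a)·S(t,a)`. -/
theorem C_solves_balance_equation
    (i m0 : ℝ × ℝ → ℝ) (m1 : ℝ × ℝ × ℝ → ℝ)
    (hi : Continuous i) (hm0 : Continuous m0) (hm1 : Continuous m1)
    (S : ℝ × ℝ → ℝ) (C : ℝ × ℝ × ℝ → ℝ)
    (hC : ∀ t a d : ℝ, C (t, a, d) = i (t - d, a - d) * S (t - d, a - d) *
      Real.exp (-∫ τ in (0:ℝ)..d, m1 (t - d + τ, a - d + τ, τ)))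
    (t0 a0 : ℝ) :
    C (t0 + 0, a0 + 0, 0) = i (t0, a0) * S (t0, a0) ∧
    ∀ d : ℝ, HasDerivAt (fun x => C (t0 + x, a0 + x, x))
      (-m1 (t0 + d, a0 + d, d) * C (t0 + d, a0 + d, d)) d := by
  set f : ℝ → ℝ := fun τ => m1 (t0 + τ, a0 + τ, τ) with hf_def
  have hf : Continuous f := by
    apply hm1.comp
    fun_prop
  have hCx : ∀ x : ℝ, C (t0 + x, a0 + x, x) =
      i (t0, a0) * S (t0, a0) * Real.exp (-∫ τ in (0:ℝ)..x, f τ) := by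
    intro x
    rw [hC]
    simp [hf_def, add_sub_cancel_right, add_sub_assoc]
  constructor
  · rw [hCx]
    simp
  · intro d
    have hderiv : HasDerivAt (fun x => ∫ τ in (0:ℝ)..x, f τ) (f d) d := by
      exact intervalIntegral.integral_hasDerivAt_right
        (hf.intervalIntegrable _ _)
        (hf.stronglyMeasurableAtFilter _ _)
        hf.continuousAt
    have h2 : HasDerivAt (fun x => i (t0, a0) * S (t0, a0) *
        Real.exp (-∫ τ in (0:ℝ)..x, f τ))
        (i (t0, a0) * S (t0, a0) * (Real.exp (-∫ τ in (0:ℝ)..d, f τ) * (-f d))) d := by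
      exact (((hderiv.neg).exp)).const_mul _
    have heq : (fun x => C (t0 + x, a0 + x, x)) = fun x =>
        i (t0, a0) * S (t0, a0) * Real.exp (-∫ τ in (0:ℝ)..x, f τ) := by
      funext x; exact hCx x
    rw [heq, hCx]
    convert h2 using 1
    ring
end

section
/- (Lemma of Brinks–Landwehr along characteristics.) Fix a birth time c ∈ ℝ. Let D : ℝ × ℝ → ℝ be continuously differentiable (D(a,δ) represents C(c+a, a, δ), the diseased of age a with duration δ in the cohort born at c), let m1 : ℝ × ℝ → ℝ be continuous (m1(a,δ) representing m1(c+a, a, δ)), and let i, S : ℝ → ℝ be continuous (values along the cohort). Assume for all a ≥ 0 and 0 ≤ δ ≤ a that ∂_a D(a,δ) + ∂_δ D(a,δ) = -m1(a,δ) · D(a,δ), and D(a,0) = i(a)·S(a). Define C*(a) := ∫_0^a D(a,δ) dδ. Then for every a > 0, C* is differentiable at a with (C*)'(a) = i(a)·S(a) - ∫_0^a m1(a,δ)·D(a,δ) dδ; in particular, if C*(a) > 0 and m1*(a) := (∫_0^a m1(a,δ)·D(a,δ) dδ) / (∫_0^a D(a,δ) dδ), then (C*)'(a) = -m1*(a)·C*(a)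 + i(a)·S(a). -/
open intervalIntegral Metric Set Filter Asymptotics MeasureTheory
open scoped NNReal Topology

/-!
Substituting `s = x - δ` writes `C*(x) = ∫₀ˣ D(x, x - s) ds`, an integral whose integrand moves
along the characteristic direction `(1, 1)` as `x` varies. Leibniz' rule for a variable upper
limit then gives the boundary term `D(x, 0) = i(x) S(x)` plus the integral of the directional
derivative `(∂ₐ + ∂_δ) D = -m1 D`. Leibniz' rule itself follows from splitting
`∫_b^x f(x, s) ds` into an integral with fixed limits (differentiation under the integral sign),
a primitive of `f(x₀, ·)` (fundamental theorem of calculus) and a remainder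
`∫_{x₀}^x (f(x, s) - f(x₀, s)) ds`, which is `O((x - x₀)²)` because `f` is locally Lipschitz.
-/

variable {E : Type*} [NormedAddCommGroup E] [NormedSpace ℝ E]

theorem hasDerivAt_intervalIntegral_of_contDiff {f : ℝ × ℝ → E} (hf : ContDiff ℝ 1 f)
    (a b x₀ : ℝ) :
    HasDerivAt (fun x => ∫ s in a..b, f (x, s)) (∫ s in a..b, fderiv ℝ f (x₀, s) (1, 0)) x₀ := by
  have hpartial : ∀ x s, HasDerivAt (fun x => f (x, s)) (fderiv ℝ f (x, s) (1, 0)) x :=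
    fun x s => (hf.differentiable one_ne_zero (x, s)).hasFDerivAt.comp_hasDerivAt x
      ((hasDerivAt_id x).prodMk (hasDerivAt_const x s))
  have hcont : Continuous f := hf.continuous
  have hcont' : Continuous fun p : ℝ × ℝ => fderiv ℝ f p (1, 0) :=
    (hf.continuous_fderiv one_ne_zero).clm_apply continuous_const
  obtain ⟨C, hC⟩ := ((isCompact_closedBall x₀ 1).prod isCompact_uIcc).exists_bound_of_continuousOn
    hcont'.continuousOn
  refine (hasDerivAt_integral_of_dominated_loc_of_deriv_le (bound := fun _ => C)
    (closedBall_mem_nhds x₀ one_pos) (Eventually.of_forall fun x => ?_) ?_ ?_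
    (ae_of_all _ fun s hs x hx => hC (x, s) ⟨hx, uIoc_subset_uIcc hs⟩) intervalIntegrable_const
    (ae_of_all _ fun s _ x _ => hpartial x s)).2
  · exact (hcont.comp (continuous_const.prodMk continuous_id)).aestronglyMeasurable
  · exact (hcont.comp (continuous_const.prodMk continuous_id)).intervalIntegrable _ _
  · exact (hcont'.comp (continuous_const.prodMk continuous_id)).aestronglyMeasurable

theorem hasDerivAt_intervalIntegral_sub_of_lipschitzOnWith {f : ℝ × ℝ → E} {x₀ : ℝ} {K : ℝ≥0}
    {t : Set (ℝ × ℝ)} (ht : t ∈ 𝓝 (x₀, x₀)) (hf : LipschitzOnWith K f t) :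
    HasDerivAt (fun x => ∫ s in x₀..x, (f (x, s) - f (x₀, s))) 0 x₀ := by
  obtain ⟨ε, hε, hball⟩ := Metric.mem_nhds_iff.1 ht
  have hbound : ∀ x ∈ ball x₀ ε, ‖∫ s in x₀..x, (f (x, s) - f (x₀, s))‖ ≤ K * ‖x - x₀‖ ^ 2 := by
    intro x hx
    rw [mem_ball, Real.dist_eq] at hx
    have hpt : ∀ s ∈ uIoc x₀ x, ‖f (x, s) - f (x₀, s)‖ ≤ K * |x - x₀| := by
      intro s hs
      have hs' : |s - x₀| ≤ |x - x₀| := abs_sub_left_of_mem_uIcc (uIoc_subset_uIcc hs)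
      have hmem : ∀ y, |y - x₀| < ε → (y, s) ∈ t := fun y hy => hball <| by
        simp only [mem_ball, Prod.dist_eq, Real.dist_eq, max_lt_iff]
        exact ⟨hy, hs'.trans_lt hx⟩
      simpa [← dist_eq_norm, Prod.dist_eq, Real.dist_eq] using
        hf.dist_le_mul _ (hmem x hx) _ (hmem x₀ (by simpa using hε))
    calc ‖∫ s in x₀..x, (f (x, s) - f (x₀, s))‖ ≤ K * |x - x₀| * |x - x₀| :=
          norm_integral_le_of_norm_le_const hpt
      _ = K * ‖x - x₀‖ ^ 2 := by rw [Real.norm_eq_abs]; ring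
  have hbigO : (fun x => ∫ s in x₀..x, (f (x, s) - f (x₀, s))) =O[𝓝 x₀] fun x => ‖x - x₀‖ ^ 2 :=
    IsBigO.of_bound K (eventually_of_mem (ball_mem_nhds x₀ hε) fun x hx => by
      simpa using hbound x hx)
  rw [hasDerivAt_iff_isLittleO]
  simpa using hbigO.trans_isLittleO (isLittleO_pow_sub_sub x₀ one_lt_two)

theorem hasDerivAt_intervalIntegral_diag_of_contDiff [CompleteSpace E] {f : ℝ × ℝ → E}
    (hf : ContDiff ℝ 1 f) (b x₀ : ℝ) :
    HasDerivAt (fun x => ∫ s in b..x, f (x, s))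
      (f (x₀, x₀) + ∫ s in b..x₀, fderiv ℝ f (x₀, s) (1, 0)) x₀ := by
  have hcont : ∀ x, Continuous fun s => f (x, s) := fun x =>
    hf.continuous.comp (continuous_const.prodMk continuous_id)
  have hsplit : (fun x => ∫ s in b..x, f (x, s)) = fun x =>
      (∫ s in b..x₀, f (x, s)) + (∫ s in x₀..x, f (x₀, s)) +
        ∫ s in x₀..x, (f (x, s) - f (x₀, s)) := by
    funext x
    rw [add_assoc, ← integral_add (f := fun s => f (x₀, s)) (g := fun s => f (x, s) - f (x₀, s))
      ((hcont x₀).intervalIntegrable _ _) (((hcont x).sub (hcont x₀)).intervalIntegrable _ _),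
      ← integral_add_adjacent_intervals ((hcont x).intervalIntegrable b x₀)
        ((hcont x).intervalIntegrable x₀ x)]
    simp only [add_sub_cancel]
  obtain ⟨K, t, ht, hlip⟩ := (hf.contDiffAt (x := (x₀, x₀))).exists_lipschitzOnWith
  rw [hsplit]
  exact (((hasDerivAt_intervalIntegral_of_contDiff hf b x₀ x₀).add
    ((hcont x₀).integral_hasStrictDerivAt x₀ x₀).hasDerivAt).add
      (hasDerivAt_intervalIntegral_sub_of_lipschitzOnWith ht hlip)).congr_deriv
        (by rw [add_zero, add_comm])

theorem hasDerivAt_integral_along_characteristics [CompleteSpace E] {D : ℝ × ℝ → E}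
    (hD : ContDiff ℝ 1 D) (x₀ : ℝ) :
    HasDerivAt (fun x => ∫ δ in (0 : ℝ)..x, D (x, δ))
      (D (x₀, 0) + ∫ δ in (0 : ℝ)..x₀, fderiv ℝ D (x₀, δ) (1, 1)) x₀ := by
  let L : ℝ × ℝ →L[ℝ] ℝ × ℝ :=
    (ContinuousLinearMap.fst ℝ ℝ ℝ).prod
      (ContinuousLinearMap.fst ℝ ℝ ℝ - ContinuousLinearMap.snd ℝ ℝ ℝ)
  have hL : ∀ p, L p = (p.1, p.1 - p.2) := fun p => rfl
  have hfderiv : ∀ p, fderiv ℝ (D ∘ L) p (1, 0) = fderiv ℝ D (L p) (1, 1) := fun p => by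
    rw [((hD.differentiable one_ne_zero (L p)).hasFDerivAt.comp p L.hasFDerivAt).fderiv]
    simp [hL]
  have hsub : ∀ (g : ℝ × ℝ → E) x,
      ∫ δ in (0 : ℝ)..x, g (x, δ) = ∫ s in (0 : ℝ)..x, g (x, x - s) :=
    fun g x => by simp [integral_comp_sub_left (fun δ => g (x, δ)) x]
  have h := hasDerivAt_intervalIntegral_diag_of_contDiff (hD.comp L.contDiff) 0 x₀
  simp only [hfderiv, Function.comp_apply, hL, sub_self] at h
  rwa [funext (hsub D), show ∫ δ in (0 : ℝ)..x₀, fderiv ℝ D (x₀, δ) (1, 1) = _ from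
    hsub (fun p => fderiv ℝ D p (1, 1)) x₀]

theorem brinks_landwehr_lemma_general
    (D : ℝ × ℝ → ℝ) (hD : ContDiff ℝ 1 D)
    (m1 : ℝ × ℝ → ℝ)
    (i S : ℝ → ℝ)
    (hpde : ∀ a δ : ℝ, 0 ≤ a → 0 ≤ δ → δ ≤ a →
      fderiv ℝ D (a, δ) (1, 0) + fderiv ℝ D (a, δ) (0, 1) = -m1 (a, δ) * D (a, δ))
    (hinit : ∀ a : ℝ, D (a, 0) = i a * S a) :
    ∀ a : ℝ, 0 < a →
      HasDerivAt (fun x => ∫ δ in (0:ℝ)..x, D (x, δ))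
        (i a * S a - ∫ δ in (0:ℝ)..a, m1 (a, δ) * D (a, δ)) a ∧
      (0 < (∫ δ in (0:ℝ)..a, D (a, δ)) →
        i a * S a - (∫ δ in (0:ℝ)..a, m1 (a, δ) * D (a, δ)) =
          -((∫ δ in (0:ℝ)..a, m1 (a, δ) * D (a, δ)) /
              (∫ δ in (0:ℝ)..a, D (a, δ))) * (∫ δ in (0:ℝ)..a, D (a, δ))
            + i a * S a) := by
  intro a ha
  have htransport : ∫ δ in (0:ℝ)..a, fderiv ℝ D (a, δ) (1, 1) =
      -∫ δ in (0:ℝ)..a, m1 (a, δ) * D (a, δ) := by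
    rw [← intervalIntegral.integral_neg]
    refine integral_congr fun δ hδ => ?_
    rw [uIcc_of_le ha.le] at hδ
    have hsplit : ((1, 1) : ℝ × ℝ) = (1, 0) + (0, 1) := by simp
    rw [hsplit, map_add, hpde a δ ha.le hδ.1 hδ.2, neg_mul]
  refine ⟨?_, fun hpos => ?_⟩
  · simpa [htransport, hinit, sub_eq_add_neg] using hasDerivAt_integral_along_characteristics hD a
  · rw [neg_mul, div_mul_cancel₀ _ hpos.ne']
    ring

/-- Lemma of Brinks–Landwehr along characteristics: the total number of diseased
`C*(a) = ∫_0^a D(a,δ) dδ` satisfies `(C*)'(a) = i(a)·S(a) - ∫_0^a m1·D dδ`,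
hence with the duration-averaged mortality `m1*`,
`(C*)'(a) = -m1*(a)·C*(a) + i(a)·S(a)`. -/
theorem brinks_landwehr_lemma
    (c : ℝ) (D : ℝ × ℝ → ℝ) (hD : ContDiff ℝ 1 D)
    (m1 : ℝ × ℝ → ℝ) (hm1 : Continuous m1)
    (i S : ℝ → ℝ) (hi : Continuous i) (hS : Continuous S)
    (hpde : ∀ a δ : ℝ, 0 ≤ a → 0 ≤ δ → δ ≤ a →
      fderiv ℝ D (a, δ) (1, 0) + fderiv ℝ D (a, δ) (0, 1) = -m1 (a, δ) * D (a, δ))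
    (hinit : ∀ a : ℝ, D (a, 0) = i a * S a) :
    ∀ a : ℝ, 0 < a →
      HasDerivAt (fun x => ∫ δ in (0:ℝ)..x, D (x, δ))
        (i a * S a - ∫ δ in (0:ℝ)..a, m1 (a, δ) * D (a, δ)) a ∧
      (0 < (∫ δ in (0:ℝ)..a, D (a, δ)) →
        i a * S a - (∫ δ in (0:ℝ)..a, m1 (a, δ) * D (a, δ)) =
          -((∫ δ in (0:ℝ)..a, m1 (a, δ) * D (a, δ)) /
              (∫ δ in (0:ℝ)..a, D (a, δ))) * (∫ δ in (0:ℝ)..a, D (a, δ))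
            + i a * S a) :=
  brinks_landwehr_lemma_general D hD m1 i S hpde hinit
end

section
/- (Brinks–Landwehr PDE for the age-specific prevalence, along characteristics.) Let i, m0, m1* : ℝ → ℝ, and let S, C* : ℝ → ℝ be differentiable with S(a) > 0 and C*(a) ≥ 0 for all a, satisfying S'(a) = -(m0(a) + i(a))·S(a) and (C*)'(a) = -m1*(a)·C*(a) + i(a)·S(a). Define the prevalence p(a) := C*(a) / (S(a) + C*(a)). Then p is differentiable and for every a: p'(a) = (1 - p(a)) · ( i(a) - p(a)·(m1*(a) - m0(a)) ). -/
theorem HasDerivAt.div_add_self {𝕜 : Type*} [NontriviallyNormedField 𝕜] {f g : 𝕜 → 𝕜}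
    {f' g' x : 𝕜} (hf : HasDerivAt f f' x) (hg : HasDerivAt g g' x) (h : f x + g x ≠ 0) :
    HasDerivAt (fun y => g y / (f y + g y)) ((g' * f x - g x * f') / (f x + g x) ^ 2) x :=
  (hg.div (hf.fun_add hg) h).congr_deriv (by ring)

-- The incidence terms cancel in `(S + C)'`, and `S / (S + C) = 1 - p` factors out.
theorem prevalence_quotient_rule_eq {K : Type*} [Field K] {S C i m₀ m₁ : K} (h : S + C ≠ 0) :
    ((-m₁ * C + i * S) * S - C * (-(m₀ + i) * S)) / (S + C) ^ 2 =
      (1 - C / (S + C)) * (i - C / (S + C) * (m₁ - m₀)) := by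
  field_simp
  ring

/-- Brinks–Landwehr PDE for the age-specific prevalence along characteristics:
`p' = (1 - p)·(i - p·(m1* - m0))` for `p = C*/(S + C*)`. -/
theorem prevalence_pde_along_characteristics
    (i m0 m1s S Cs : ℝ → ℝ)
    (hS : Differentiable ℝ S) (hCs : Differentiable ℝ Cs)
    (hSpos : ∀ a, 0 < S a) (hCnn : ∀ a, 0 ≤ Cs a)
    (hSode : ∀ a, deriv S a = -(m0 a + i a) * S a)
    (hCode : ∀ a, deriv Cs a = -m1s a * Cs a + i a * S a) :
    Differentiable ℝ (fun a => Cs a / (S a + Cs a)) ∧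
    ∀ a, deriv (fun a => Cs a / (S a + Cs a)) a =
      (1 - Cs a / (S a + Cs a)) *
        (i a - (Cs a / (S a + Cs a)) * (m1s a - m0 a)) := by
  have hden : ∀ a, S a + Cs a ≠ 0 := fun a => (add_pos_of_pos_of_nonneg (hSpos a) (hCnn a)).ne'
  have hp : ∀ a, HasDerivAt (fun a => Cs a / (S a + Cs a))
      ((deriv Cs a * S a - Cs a * deriv S a) / (S a + Cs a) ^ 2) a := fun a =>
    (hS a).hasDerivAt.div_add_self (hCs a).hasDerivAt (hden a)
  refine ⟨fun a => (hp a).differentiableAt, fun a => ?_⟩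
  rw [(hp a).deriv, hSode, hCode]
  exact prevalence_quotient_rule_eq (hden a)
end

section
/- (Brunet–Struchiner PDE for the prevalence odds, along characteristics.) Let p : ℝ → ℝ be differentiable with p(a) < 1 for all a, let i, m0, m1 : ℝ → ℝ, and assume p'(a) = (1 - p(a))·( i(a) - p(a)·(m1(a) - m0(a)) ) for all a. Define the prevalence odds π(a) := p(a)/(1 - p(a)). Then π is differentiable and for every a: π'(a) = ( i(a) - (m1(a) - m0(a)) )·π(a) + i(a). -/
/-- Brunet–Struchiner PDE for the prevalence odds along characteristics:
`π' = (i - (m1 - m0))·π + i` for `π = p/(1 - p)`. -/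
theorem brunet_struchiner_odds_pde
    (p i m0 m1 : ℝ → ℝ)
    (hp : Differentiable ℝ p) (hp1 : ∀ a, p a < 1)
    (h : ∀ a, deriv p a = (1 - p a) * (i a - p a * (m1 a - m0 a))) :
    Differentiable ℝ (fun a => p a / (1 - p a)) ∧
    ∀ a, deriv (fun a => p a / (1 - p a)) a =
      (i a - (m1 a - m0 a)) * (p a / (1 - p a)) + i a := by
  have hne : ∀ a, 1 - p a ≠ 0 := fun a => sub_ne_zero.2 (ne_of_gt (hp1 a))
  have hd : ∀ a, HasDerivAt (fun a => p a / (1 - p a))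
      ((deriv p a * (1 - p a) - p a * (0 - deriv p a)) / (1 - p a) ^ 2) a := by
    intro a
    exact (hp a).hasDerivAt.div ((hasDerivAt_const a 1).sub (hp a).hasDerivAt) (hne a)
  refine ⟨fun a => (hd a).differentiableAt, fun a => ?_⟩
  rw [(hd a).deriv, h a]
  field_simp [hne a]
  ring
end

section
/- (Keiding's formula for the prevalence odds.) Let i, m0 : ℝ × ℝ → ℝ and m1 : ℝ × ℝ × ℝ → ℝ be continuous, let S0 : ℝ → ℝ with S0(t-a) > 0, fix t ∈ ℝ and a ≥ 0, and define M_{t,a}(y) := exp(-∫_0^y (m0(t-a+τ, τ) + i(t-a+τ, τ)) dτ), the number of healthy subjects S(t,a) := S0(t-a)·M_{t,a}(a), and the total number of diseased subjects C*(t,a) := ∫_0^a i(t-δ, a-δ)·S(t-δ, a-δ)·exp(-∫_0^δ m1(t-δ+τ, a-δ+τ, τ) dτ) dδ. Then the prevalence odds π(t,a) := C*(t,a)/S(t,a) satisfies π(t,a) = ( ∫_0^a i(t-a+y, y)·M_{t,a}(y)·exp(-∫_y^a m1(t-a+τ, τ, τ-y) dτ) dy ) / M_{t,a}(a). -/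
/-- Keiding's formula for the prevalence odds `π = C*/S`. -/
theorem keiding_formula
    (i m0 : ℝ × ℝ → ℝ) (m1 : ℝ × ℝ × ℝ → ℝ)
    (hi : Continuous i) (hm0 : Continuous m0) (hm1 : Continuous m1)
    (S0 : ℝ → ℝ) (t a : ℝ) (ha : 0 ≤ a) (hS0 : 0 < S0 (t - a))
    (M : ℝ → ℝ)
    (hM : ∀ y, M y =
      Real.exp (-∫ τ in (0:ℝ)..y, (m0 (t - a + τ, τ) + i (t - a + τ, τ))))
    (S : ℝ × ℝ → ℝ)
    (hS : ∀ t' a' : ℝ, S (t', a') = S0 (t' - a') *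
      Real.exp (-∫ τ in (0:ℝ)..a', (m0 (t' - a' + τ, τ) + i (t' - a' + τ, τ)))) :
    (∫ δ in (0:ℝ)..a, i (t - δ, a - δ) * S (t - δ, a - δ) *
        Real.exp (-∫ τ in (0:ℝ)..δ, m1 (t - δ + τ, a - δ + τ, τ))) / S (t, a) =
      (∫ y in (0:ℝ)..a, i (t - a + y, y) * M y *
        Real.exp (-∫ τ in y..a, m1 (t - a + τ, τ, τ - y))) / M a := by
  set g : ℝ → ℝ := fun y => i (t - a + y, y) * M y *
      Real.exp (-∫ τ in y..a, m1 (t - a + τ, τ, τ - y)) with hg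
  have key : ∀ δ : ℝ, i (t - δ, a - δ) * S (t - δ, a - δ) *
      Real.exp (-∫ τ in (0:ℝ)..δ, m1 (t - δ + τ, a - δ + τ, τ)) =
      S0 (t - a) * g (a - δ) := by
    intro δ
    have h1 : t - δ - (a - δ) = t - a := by ring
    have hiS : i (t - δ, a - δ) * S (t - δ, a - δ) =
        S0 (t - a) * (i (t - a + (a - δ), a - δ) * M (a - δ)) := by
      rw [hS, hM, h1]
      have h2 : (t - a + (a - δ)) = t - δ := by ring
      rw [h2]
      ring
    have h3 : (∫ τ in (0:ℝ)..δ, m1 (t - δ + τ, a - δ + τ, τ)) =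
        ∫ τ in (a - δ)..a, m1 (t - a + τ, τ, τ - (a - δ)) := by
      have := intervalIntegral.integral_comp_add_right
        (a := (0:ℝ)) (b := δ) (fun τ => m1 (t - a + τ, τ, τ - (a - δ))) (a - δ)
      have hb : (0:ℝ) + (a - δ) = a - δ := by ring
      have hb2 : δ + (a - δ) = a := by ring
      rw [hb, hb2] at this
      rw [← this]
      apply intervalIntegral.integral_congr
      intro x _
      congr 1
      simp only [Prod.mk.injEq]
      and_intros <;> ring
    rw [hiS, h3, hg]
    show _ = S0 (t - a) * (i (t - a + (a - δ), a - δ) * M (a - δ) *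
      Real.exp (-∫ τ in (a - δ)..a, m1 (t - a + τ, τ, τ - (a - δ))))
    ring
  have hL : (∫ δ in (0:ℝ)..a, i (t - δ, a - δ) * S (t - δ, a - δ) *
      Real.exp (-∫ τ in (0:ℝ)..δ, m1 (t - δ + τ, a - δ + τ, τ)))
      = S0 (t - a) * ∫ y in (0:ℝ)..a, g y := by
    rw [show (∫ δ in (0:ℝ)..a, i (t - δ, a - δ) * S (t - δ, a - δ) *
        Real.exp (-∫ τ in (0:ℝ)..δ, m1 (t - δ + τ, a - δ + τ, τ)))
        = ∫ δ in (0:ℝ)..a, S0 (t - a) * g (a - δ) from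
      intervalIntegral.integral_congr (fun δ _ => key δ)]
    rw [intervalIntegral.integral_const_mul]
    congr 1
    have := intervalIntegral.integral_comp_sub_left (a := (0:ℝ)) (b := a) g a
    simp only [sub_zero, sub_self] at this
    rw [this]
  have hSta : S (t, a) = S0 (t - a) * M a := by rw [hS, hM]
  rw [hL, hSta, mul_div_mul_left _ _ (ne_of_gt hS0)]
end
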